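/- In a minimum-size unsatisfiable (3,4)-formula, the in-clause-sets of two distinct variables of degree 3 are disjoint: if x and w are distinct variables each occurring in exactly 3 clauses, then no clause contains (a literal of) both x and (a literal of) w. -/

import Mathlib

abbrev Lit := ℕ × Bool

def Lit.neg (l : Lit) : Lit := (l.1, !l.2)

abbrev Clause := Finset Lit

def Clause.nontaut (C : Clause) : Prop := ∀ l ∈ C, Lit.neg l ∉ C

instance (C : Clause) : Decidable (Clause.nontaut C) := by
  unfold Clause.nontaut; infer_instance

abbrev CNF := Finset Clause

def satClause (τ : ℕ → Bool) (C : Clause) : Prop := ∃ l ∈ C, τ l.1 = l.2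

def satCNF (τ : ℕ → Bool) (F : CNF) : Prop := ∀ C ∈ F, satClause τ C

def Satisfiable (F : CNF) : Prop := ∃ τ, satCNF τ F

def occ (F : CNF) (v : ℕ) : CNF := F.filter (fun C => (v, true) ∈ C ∨ (v, false) ∈ C)

def vdeg (F : CNF) (v : ℕ) : ℕ := (occ F v).card

def ldeg (F : CNF) (l : Lit) : ℕ := (F.filter (fun C => l ∈ C)).card

def vars (F : CNF) : Finset ℕ := F.sup (fun C => C.image Prod.fst)

def isKCNF (k : ℕ) (F : CNF) : Prop := ∀ C ∈ F, Clause.nontaut C ∧ C.card = k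

def KS (k s : ℕ) (F : CNF) : Prop := isKCNF k F ∧ ∀ v, vdeg F v ≤ s

def KPQ (k p q : ℕ) (F : CNF) : Prop :=
  isKCNF k F ∧ ∀ v, ldeg F (v, true) ≤ p ∧ ldeg F (v, false) ≤ q

def MinUnsat (F : CNF) : Prop := ¬ Satisfiable F ∧ ∀ C ∈ F, Satisfiable (F.erase C)

/-!
Let `x` have degree 3. Since `F` has no pure literal, `x` occurs as a literal `ℓ` in a single
clause `{ℓ, p, q}` and as `¬ℓ` in two clauses `C₂, C₃`. If neither `p` nor `q` lies in both
`C₂` and `C₃`, a local surgery on `occ F x` (deleting clauses, or replacing them by fewer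
3-clauses cut out of the Davis–Putnam resolvents on `x`, sometimes split by a fresh variable)
produces either a smaller unsatisfiable (3,4)-formula or a model of `F`. So `x` has a companion
literal `a` in all three of its clauses.

If a clause contains both `x` and `w`, it also contains their companions, hence (having only
three literals) these coincide. The at most three clauses containing `a` then contain
`occ F x ∪ occ F w`, so `occ F x = occ F w`. But `w` lies in the clause `{ℓ, p, q}`: making `¬ℓ`
and the literal of `w` there true extends any model of `F \ occ F x` to a model of `F`.
-/

open Finset Function

def Clause.vars (C : Clause) : Finset ℕ := C.image Prod.fst

def Clause.resolvent (ℓ : Lit) (C D : Clause) : Clause := C.erase ℓ ∪ D.erase ℓ.neg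

structure IsMinUnsat34 (F : CNF) : Prop where
  ks : KS 3 4 F
  not_satisfiable : ¬ Satisfiable F
  card_le : ∀ G : CNF, KS 3 4 G → ¬ Satisfiable G → F.card ≤ G.card

namespace Lit

@[simp] lemma neg_fst (l : Lit) : l.neg.1 = l.1 := rfl

@[simp] lemma neg_neg (l : Lit) : l.neg.neg = l := by simp [Lit.neg]

lemma neg_ne (l : Lit) : l.neg ≠ l := fun h => by simpa [Lit.neg] using congrArg Prod.snd h

lemma ne_of_fst_ne {l m : Lit} (h : l.1 ≠ m.1) : l ≠ m := mt (congrArg Prod.fst) h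

lemma eq_or_eq_neg_of_fst_eq {l m : Lit} (h : l.1 = m.1) : l = m ∨ l = m.neg := by
  obtain ⟨v, b⟩ := l
  obtain ⟨w, c⟩ := m
  obtain rfl : v = w := h
  cases b <;> cases c <;> simp [Lit.neg]

lemma neg_eval_of_not_eval {τ : ℕ → Bool} {l : Lit} (h : τ l.1 ≠ l.2) :
    τ l.neg.1 = l.neg.2 := by
  revert h
  simp only [Lit.neg]
  cases τ l.1 <;> cases l.2 <;> decide

end Lit

namespace Clause

lemma mem_vars {C : Clause} {v : ℕ} : v ∈ C.vars ↔ ∃ l ∈ C, l.1 = v := by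
  simp [Clause.vars]

@[simp] lemma vars_insert (l : Lit) (C : Clause) : (insert l C).vars = insert l.1 C.vars :=
  image_insert _ _ _

@[simp] lemma vars_singleton (l : Lit) : ({l} : Clause).vars = {l.1} := image_singleton _ _

lemma mem_vars_triple {a b c : Lit} {v : ℕ} :
    v ∈ ({a, b, c} : Clause).vars ↔ v = a.1 ∨ v = b.1 ∨ v = c.1 := by
  simp

lemma fst_mem_vars {C : Clause} {l : Lit} (hl : l ∈ C) : l.1 ∈ C.vars := mem_vars.2 ⟨l, hl, rfl⟩

lemma mem_or_neg_mem {C : Clause} {l : Lit} (h : l.1 ∈ C.vars) : l ∈ C ∨ l.neg ∈ C := by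
  obtain ⟨m, hm, hml⟩ := mem_vars.1 h
  rcases Lit.eq_or_eq_neg_of_fst_eq hml with rfl | rfl
  exacts [Or.inl hm, Or.inr hm]

lemma fst_ne_of_mem {C : Clause} (hC : C.nontaut) {l m : Lit} (hl : l ∈ C) (hm : m ∈ C)
    (hlm : l ≠ m) : l.1 ≠ m.1 := fun h => by
  rcases Lit.eq_or_eq_neg_of_fst_eq h with rfl | rfl
  exacts [hlm rfl, hC m hm hl]

lemma triple_iff {a b c : Lit} :
    (Clause.nontaut {a, b, c} ∧ ({a, b, c} : Clause).card = 3) ↔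
      a.1 ≠ b.1 ∧ a.1 ≠ c.1 ∧ b.1 ≠ c.1 := by
  constructor
  · rintro ⟨hnt, hcard⟩
    obtain ⟨hab, hac, hbc⟩ : a ≠ b ∧ a ≠ c ∧ b ≠ c := by
      refine ⟨?_, ?_, ?_⟩ <;> rintro rfl
      · have := card_le_two (a := a) (b := c); simp_all
      · have := card_le_two (a := b) (b := a); simp_all
      · have := card_le_two (a := a) (b := b); simp_all
    exact ⟨fst_ne_of_mem hnt (by simp) (by simp) hab, fst_ne_of_mem hnt (by simp) (by simp) hac,
      fst_ne_of_mem hnt (by simp) (by simp) hbc⟩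
  · rintro ⟨hab, hac, hbc⟩
    refine ⟨fun l hl hneg => ?_, card_eq_three.2 ⟨a, b, c, Lit.ne_of_fst_ne hab,
      Lit.ne_of_fst_ne hac, Lit.ne_of_fst_ne hbc, rfl⟩⟩
    simp only [mem_insert, mem_singleton] at hl hneg
    rcases hl with rfl | rfl | rfl <;> rcases hneg with h | h | h
    all_goals first | exact l.neg_ne h | (subst h; simp_all)

lemma exists_eq_triple {C : Clause} (hC : C.card = 3) {l : Lit} (hl : l ∈ C) :
    ∃ a b, C = {l, a, b} := by
  obtain ⟨a, b, -, hab⟩ := card_eq_two.1 (show (C.erase l).card = 2 by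
    rw [card_erase_of_mem hl, hC])
  exact ⟨a, b, by rw [← hab, insert_erase hl]⟩

lemma exists_eq_triple_of_mem₂ {C : Clause} (hC : C.card = 3) {l m : Lit} (hl : l ∈ C)
    (hm : m ∈ C) (hlm : l ≠ m) : ∃ a, C = {l, m, a} := by
  obtain ⟨a, b, rfl⟩ := exists_eq_triple hC hl
  simp only [mem_insert, mem_singleton] at hm
  rcases hm with rfl | rfl | rfl
  · exact absurd rfl hlm
  · exact ⟨b, rfl⟩
  · exact ⟨a, by rw [pair_comm]⟩

lemma eq_of_fst_ne {C : Clause} (hC : C.nontaut) (hcard : C.card = 3) {x w : ℕ}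
    (hx : x ∈ C.vars) (hw : w ∈ C.vars) (hxw : x ≠ w) {a b : Lit} (ha : a ∈ C) (hb : b ∈ C)
    (hax : a.1 ≠ x) (haw : a.1 ≠ w) (hbx : b.1 ≠ x) (hbw : b.1 ≠ w) : a = b := by
  by_contra hab
  have hsub : ({x, w, a.1, b.1} : Finset ℕ) ⊆ C.vars := by
    simp [insert_subset_iff, hx, hw, fst_mem_vars ha, fst_mem_vars hb]
  have h4 : ({x, w, a.1, b.1} : Finset ℕ).card = 4 := by
    rw [card_insert_of_notMem (by simp [hxw, hax.symm, hbx.symm]),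
      card_insert_of_notMem (by simp [haw.symm, hbw.symm]), card_pair (fst_ne_of_mem hC ha hb hab)]
  have := card_le_card hsub
  have : C.vars.card ≤ 3 := hcard ▸ card_image_le
  omega

end Clause

section Occurrences

variable {F : CNF} {v : ℕ}

lemma mem_occ_iff {C : Clause} : C ∈ occ F v ↔ C ∈ F ∧ v ∈ C.vars := by
  simp only [occ, mem_filter, Clause.mem_vars]
  refine and_congr_right fun _ => ⟨?_, ?_⟩
  · rintro (h | h) <;> exact ⟨_, h, rfl⟩
  · rintro ⟨⟨w, b⟩, hl, rfl⟩
    cases b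
    exacts [Or.inr hl, Or.inl hl]

lemma mem_occ_fst_iff {C : Clause} {l : Lit} :
    C ∈ occ F l.1 ↔ C ∈ F ∧ (l ∈ C ∨ l.neg ∈ C) := by
  obtain ⟨w, b⟩ := l
  cases b <;> simp [occ, Lit.neg, or_comm]

lemma occ_subset (F : CNF) (v : ℕ) : occ F v ⊆ F := filter_subset _ _

lemma mem_occ_inter {X : CNF} {C : Clause} (hC : C ∈ X) (hX : X ⊆ F) (hv : v ∈ C.vars) :
    C ∈ occ F v ∩ X :=
  mem_inter.2 ⟨mem_occ_iff.2 ⟨hX hC, hv⟩, hC⟩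

lemma exists_fresh (F : CNF) : ∃ z, ∀ C ∈ F, z ∉ C.vars := by
  obtain ⟨z, hz⟩ := Infinite.exists_notMem_finset (vars F)
  exact ⟨z, fun C hC hzC => hz (le_sup (f := fun C : Clause => C.image Prod.fst) hC hzC)⟩

end Occurrences

section Satisfaction

variable {F X : CNF} {τ : ℕ → Bool}

@[simp] lemma satClause_insert {l : Lit} {C : Clause} :
    satClause τ (insert l C) ↔ τ l.1 = l.2 ∨ satClause τ C := by
  simp [satClause]

@[simp] lemma satClause_singleton {l : Lit} : satClause τ {l} ↔ τ l.1 = l.2 := by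
  simp [satClause]

lemma satClause_mono {C D : Clause} (h : C ⊆ D) : satClause τ C → satClause τ D :=
  fun ⟨l, hl, hτ⟩ => ⟨l, h hl, hτ⟩

lemma satCNF_mono {G : CNF} (h : G ⊆ F) : satCNF τ F → satCNF τ G :=
  fun hF C hC => hF C (h hC)

lemma satClause_resolvent_left {ℓ l : Lit} {C D : Clause} (hl : l ∈ C) (hlℓ : l ≠ ℓ)
    (hτ : τ l.1 = l.2) : satClause τ (Clause.resolvent ℓ C D) :=
  ⟨l, mem_union_left _ (mem_erase.2 ⟨hlℓ, hl⟩), hτ⟩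

lemma satClause_resolvent_right {ℓ l : Lit} {C D : Clause} (hl : l ∈ D) (hlℓ : l ≠ ℓ.neg)
    (hτ : τ l.1 = l.2) : satClause τ (Clause.resolvent ℓ C D) :=
  ⟨l, mem_union_right _ (mem_erase.2 ⟨hlℓ, hl⟩), hτ⟩

lemma satClause_update_iff_of_not_mem_vars {C : Clause} {u : ℕ} (hu : u ∉ C.vars) (b : Bool) :
    satClause (update τ u b) C ↔ satClause τ C := by
  refine exists_congr fun l => and_congr_right fun hl => ?_
  rw [update_of_ne fun (h : l.1 = u) => hu (h ▸ Clause.fst_mem_vars hl)]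

lemma satClause_update_of_neg_not_mem {C : Clause} {ℓ : Lit} (hC : ℓ.neg ∉ C)
    (h : satClause τ C) : satClause (update τ ℓ.1 ℓ.2) C := by
  obtain ⟨l, hl, hτ⟩ := h
  refine ⟨l, hl, ?_⟩
  by_cases hlℓ : l.1 = ℓ.1
  · rcases Lit.eq_or_eq_neg_of_fst_eq hlℓ with rfl | rfl
    · exact update_self _ _ _
    · exact absurd hl hC
  · rwa [update_of_ne hlℓ]

lemma satCNF_update_of_occ_subset {u : ℕ} (hτ : satCNF τ (F \ X)) (hu : occ F u ⊆ X) (b : Bool) :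
    satCNF (update τ u b) (F \ X) := fun C hC =>
  (satClause_update_iff_of_not_mem_vars
    (fun hv => (mem_sdiff.1 hC).2 (hu (mem_occ_iff.2 ⟨(mem_sdiff.1 hC).1, hv⟩))) b).2 (hτ C hC)

lemma satCNF_update_of_satClause_erase {ℓ : Lit} (hτ : satCNF τ (F \ occ F ℓ.1))
    (hneg : ∀ D ∈ F, ℓ.neg ∈ D → satClause τ (D.erase ℓ.neg)) :
    satCNF (update τ ℓ.1 ℓ.2) F := by
  intro C hC
  by_cases hℓ : ℓ ∈ C
  · exact ⟨ℓ, hℓ, update_self _ _ _⟩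
  by_cases hn : ℓ.neg ∈ C
  · exact satClause_mono (erase_subset _ _)
      (satClause_update_of_neg_not_mem (notMem_erase _ _) (hneg C hC hn))
  · exact satClause_update_of_neg_not_mem hn
      (hτ C (mem_sdiff.2 ⟨hC, fun h => (mem_occ_fst_iff.1 h).2.elim hℓ hn⟩))

lemma satisfiable_of_satClause_resolvent (ℓ : Lit) (hτ : satCNF τ (F \ occ F ℓ.1))
    (hres : ∀ C ∈ F, ℓ ∈ C → ∀ D ∈ F, ℓ.neg ∈ D → satClause τ (Clause.resolvent ℓ C D)) :
    Satisfiable F := by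
  by_cases hpos : ∀ C ∈ F, ℓ ∈ C → satClause τ (C.erase ℓ)
  · exact ⟨_, satCNF_update_of_satClause_erase (ℓ := ℓ.neg) hτ (by simpa using hpos)⟩
  · push Not at hpos
    obtain ⟨C, hC, hℓC, hCτ⟩ := hpos
    refine ⟨_, satCNF_update_of_satClause_erase hτ fun D hD hn => ?_⟩
    obtain ⟨l, hl, hlτ⟩ := hres C hC hℓC D hD hn
    rcases mem_union.1 hl with hl | hl
    · exact absurd ⟨l, hl, hlτ⟩ hCτ
    · exact ⟨l, hl, hlτ⟩

end Satisfaction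

section Degrees

variable {F G : CNF} {v : ℕ}

lemma vdeg_mono (h : G ⊆ F) (v : ℕ) : vdeg G v ≤ vdeg F v :=
  card_le_card (filter_subset_filter _ h)

lemma vdeg_le_card (F : CNF) (v : ℕ) : vdeg F v ≤ F.card := card_filter_le _ _

lemma vdeg_union_le (F G : CNF) (v : ℕ) : vdeg (F ∪ G) v ≤ vdeg F v + vdeg G v := by
  unfold vdeg occ
  rw [filter_union]
  exact card_union_le _ _

lemma vdeg_sdiff_add_card_inter (F X : CNF) (v : ℕ) :
    vdeg (F \ X) v + (occ F v ∩ X).card = vdeg F v := by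
  have : occ (F \ X) v = occ F v \ X := by
    ext C
    simp only [mem_occ_iff, mem_sdiff]
    tauto
  rw [vdeg, this, card_sdiff_add_card_inter, vdeg]

lemma vdeg_eq_zero_of_fresh (hv : ∀ C ∈ F, v ∉ C.vars) : vdeg F v = 0 :=
  card_eq_zero.2 <| eq_empty_of_forall_notMem fun _ hC =>
    hv _ (mem_occ_iff.1 hC).1 (mem_occ_iff.1 hC).2

lemma vdeg_sdiff_add_le_of_fresh {X Y : CNF} {z : ℕ} (hz : ∀ C ∈ F, z ∉ C.vars)
    (hY : Y.card ≤ 4) : vdeg (F \ X) z + vdeg Y z ≤ 4 := by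
  rw [vdeg_eq_zero_of_fresh fun C hC => hz C (mem_sdiff.1 hC).1, zero_add]
  exact (vdeg_le_card Y z).trans hY

lemma ldeg_add_ldeg_neg {k : ℕ} (hK : isKCNF k F) (l : Lit) :
    ldeg F l + ldeg F l.neg = vdeg F l.1 := by
  unfold ldeg vdeg
  rw [← card_union_of_disjoint (disjoint_filter.2 fun C hC hl hn => (hK C hC).1 l hl hn)]
  congr 1
  ext C
  simp only [mem_occ_fst_iff, mem_union, mem_filter]
  tauto

lemma card_le_ldeg {W : CNF} {l : Lit} (hW : W ⊆ F) (hl : ∀ C ∈ W, l ∈ C) :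
    W.card ≤ ldeg F l :=
  card_le_card fun C hC => mem_filter.2 ⟨hW hC, hl C hC⟩

lemma vdeg_pair_le {D₁ D₂ A₁ A₂ : Clause} {W : CNF} (h₁ : v ∈ D₁.vars → A₁ ∈ W)
    (h₂ : v ∈ D₂.vars → A₂ ∈ W) (hne : v ∈ D₁.vars → v ∈ D₂.vars → A₁ ≠ A₂) :
    vdeg {D₁, D₂} v ≤ W.card := by
  refine card_le_card_of_injOn (fun D => if D = D₁ then A₁ else A₂) ?_ ?_
  · intro D hD
    obtain ⟨hD, hv⟩ := mem_occ_iff.1 (mem_coe.1 hD)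
    simp only [mem_coe]
    split_ifs with h
    · exact h₁ (h ▸ hv)
    · rcases mem_insert.1 hD with rfl | hD
      exacts [absurd rfl h, h₂ (mem_singleton.1 hD ▸ hv)]
  · intro D hD D' hD' h
    obtain ⟨hD, hv⟩ := mem_occ_iff.1 (mem_coe.1 hD)
    obtain ⟨hD', hv'⟩ := mem_occ_iff.1 (mem_coe.1 hD')
    simp only [mem_insert, mem_singleton] at hD hD'
    by_contra hDD'
    rcases hD with rfl | rfl <;> rcases hD' with rfl | rfl
    all_goals first
      | exact absurd rfl hDD'
      | exact hne hv hv' (by simpa [hDD', Ne.symm hDD'] using h)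
      | exact hne hv' hv (by simpa [hDD', Ne.symm hDD'] using h.symm)

end Degrees

namespace IsMinUnsat34

variable {F X : CNF}

lemma satisfiable_replace (hF : IsMinUnsat34 F) {Y : CNF} (hX : X ⊆ F)
    (hcard : Y.card < X.card) (hY : isKCNF 3 Y) (hdeg : ∀ v, vdeg (F \ X) v + vdeg Y v ≤ 4) :
    Satisfiable (F \ X ∪ Y) := by
  by_contra h
  have hG : KS 3 4 (F \ X ∪ Y) := by
    refine ⟨fun C hC => ?_, fun v => (vdeg_union_le _ _ v).trans (hdeg v)⟩
    rcases mem_union.1 hC with hC | hC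
    exacts [hF.ks.1 C (mem_sdiff.1 hC).1, hY C hC]
  have := hF.card_le _ hG h
  have := card_union_le (F \ X) Y
  have := card_sdiff_of_subset hX
  have := card_le_card hX
  omega

lemma satisfiable_sdiff (hF : IsMinUnsat34 F) (hX : X ⊆ F) (hne : X.Nonempty) :
    Satisfiable (F \ X) := by
  simpa using hF.satisfiable_replace (Y := ∅) hX (card_pos.2 hne) (by simp [isKCNF]) fun v => by
    simpa [vdeg, occ] using (vdeg_mono sdiff_subset v).trans (hF.ks.2 v)

lemma exists_satCNF_sdiff_pair (hF : IsMinUnsat34 F) {D₁ D₂ : Clause} (hX : X ⊆ F)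
    (hcard : 3 ≤ X.card) (hD₁ : D₁.nontaut ∧ D₁.card = 3) (hD₂ : D₂.nontaut ∧ D₂.card = 3)
    (hdeg : ∀ v, vdeg (F \ X) v + vdeg {D₁, D₂} v ≤ 4) :
    ∃ τ, satCNF τ (F \ X) ∧ satClause τ D₁ ∧ satClause τ D₂ := by
  obtain ⟨τ, hτ⟩ := hF.satisfiable_replace hX (card_le_two.trans_lt hcard)
    (by simp [isKCNF, hD₁, hD₂]) hdeg
  exact ⟨τ, satCNF_mono subset_union_left hτ, hτ _ (mem_union_right _ (mem_insert_self _ _)),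
    hτ _ (mem_union_right _ (mem_insert_of_mem (mem_singleton_self _)))⟩

lemma vdeg_sdiff_add_le (hF : IsMinUnsat34 F) {Y : CNF} {v : ℕ}
    (h : vdeg Y v ≤ (occ F v ∩ X).card) : vdeg (F \ X) v + vdeg Y v ≤ 4 := by
  have := vdeg_sdiff_add_card_inter F X v
  have := hF.ks.2 v
  omega

lemma ldeg_pos (hF : IsMinUnsat34 F) {l : Lit} (hl : 0 < vdeg F l.1) : 0 < ldeg F l := by
  by_contra h0
  have hl' : ∀ C ∈ F, l ∉ C := fun C hC hlC => h0 (card_pos.2 ⟨C, mem_filter.2 ⟨hC, hlC⟩⟩)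
  obtain ⟨τ, hτ⟩ := hF.satisfiable_sdiff (occ_subset F l.1) (card_pos.1 hl)
  exact hF.not_satisfiable ⟨_, satCNF_update_of_satClause_erase (ℓ := l.neg) hτ
    fun D hD h => absurd (by simpa using h) (hl' D hD)⟩

end IsMinUnsat34

/-- The occurrence pattern of a degree-3 variable without pure literals: `ℓ` once, in
`{ℓ, p, q}`, and `¬ℓ` twice. -/
structure Occ12 (F : CNF) (ℓ p q : Lit) (C₂ C₃ : Clause) : Prop where
  pos : F.filter (ℓ ∈ ·) = {{ℓ, p, q}}
  neg : F.filter (ℓ.neg ∈ ·) = {C₂, C₃}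
  ne : C₂ ≠ C₃

namespace Occ12

variable {F : CNF} {ℓ p q : Lit} {C₂ C₃ : Clause}

lemma swap_pq (h : Occ12 F ℓ p q C₂ C₃) : Occ12 F ℓ q p C₂ C₃ :=
  ⟨by rw [h.pos, pair_comm], h.neg, h.ne⟩

lemma swap₂₃ (h : Occ12 F ℓ p q C₂ C₃) : Occ12 F ℓ p q C₃ C₂ :=
  ⟨h.pos, by rw [h.neg, pair_comm], h.ne.symm⟩

lemma occ_eq (h : Occ12 F ℓ p q C₂ C₃) : occ F ℓ.1 = {{ℓ, p, q}, C₂, C₃} := by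
  ext C
  have h₁ : C ∈ F ∧ ℓ ∈ C ↔ C = {ℓ, p, q} := by simpa using congrArg (C ∈ ·) h.pos
  have h₂₃ : C ∈ F ∧ ℓ.neg ∈ C ↔ C = C₂ ∨ C = C₃ := by simpa using congrArg (C ∈ ·) h.neg
  rw [mem_occ_fst_iff, mem_insert, mem_insert, mem_singleton, ← h₁, ← h₂₃]
  tauto

lemma mem_occ₁ (h : Occ12 F ℓ p q C₂ C₃) : {ℓ, p, q} ∈ occ F ℓ.1 := by simp [h.occ_eq]

lemma mem_occ₂ (h : Occ12 F ℓ p q C₂ C₃) : C₂ ∈ occ F ℓ.1 := by simp [h.occ_eq]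

lemma mem_occ₃ (h : Occ12 F ℓ p q C₂ C₃) : C₃ ∈ occ F ℓ.1 := h.swap₂₃.mem_occ₂

lemma mem₁ (h : Occ12 F ℓ p q C₂ C₃) : {ℓ, p, q} ∈ F := occ_subset F ℓ.1 h.mem_occ₁

lemma mem₂ (h : Occ12 F ℓ p q C₂ C₃) : C₂ ∈ F := occ_subset F ℓ.1 h.mem_occ₂

lemma mem₃ (h : Occ12 F ℓ p q C₂ C₃) : C₃ ∈ F := h.swap₂₃.mem₂

lemma neg_mem₂ (h : Occ12 F ℓ p q C₂ C₃) : ℓ.neg ∈ C₂ :=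
  (mem_filter.1 (h.neg ▸ mem_insert_self _ _ : C₂ ∈ F.filter (ℓ.neg ∈ ·))).2

lemma neg_mem₃ (h : Occ12 F ℓ p q C₂ C₃) : ℓ.neg ∈ C₃ := h.swap₂₃.neg_mem₂

lemma fst_ne (h : Occ12 F ℓ p q C₂ C₃) (hK : isKCNF 3 F) :
    ℓ.1 ≠ p.1 ∧ ℓ.1 ≠ q.1 ∧ p.1 ≠ q.1 :=
  Clause.triple_iff.1 (hK _ h.mem₁)

lemma ne₁₂ (h : Occ12 F ℓ p q C₂ C₃) (hK : isKCNF 3 F) : {ℓ, p, q} ≠ C₂ := fun h₁₂ =>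
  (hK _ h.mem₂).1 ℓ (h₁₂ ▸ mem_insert_self _ _) h.neg_mem₂

lemma ne₁₃ (h : Occ12 F ℓ p q C₂ C₃) (hK : isKCNF 3 F) : {ℓ, p, q} ≠ C₃ := h.swap₂₃.ne₁₂ hK

lemma vdeg_eq (h : Occ12 F ℓ p q C₂ C₃) (hK : isKCNF 3 F) : vdeg F ℓ.1 = 3 := by
  rw [← ldeg_add_ldeg_neg hK, ldeg, ldeg, h.pos, h.neg, card_singleton, card_pair h.ne]

lemma satisfiable (h : Occ12 F ℓ p q C₂ C₃) {τ : ℕ → Bool} (hτ : satCNF τ (F \ occ F ℓ.1))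
    (h₂ : satClause τ (Clause.resolvent ℓ {ℓ, p, q} C₂))
    (h₃ : satClause τ (Clause.resolvent ℓ {ℓ, p, q} C₃)) : Satisfiable F := by
  refine satisfiable_of_satClause_resolvent ℓ hτ fun C hC hℓ D hD hn => ?_
  have hC₁ : C ∈ F.filter (ℓ ∈ ·) := mem_filter.2 ⟨hC, hℓ⟩
  have hD₂₃ : D ∈ F.filter (ℓ.neg ∈ ·) := mem_filter.2 ⟨hD, hn⟩
  rw [h.pos, mem_singleton] at hC₁
  rw [h.neg, mem_insert, mem_singleton] at hD₂₃
  rcases hD₂₃ with rfl | rfl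
  exacts [hC₁ ▸ h₂, hC₁ ▸ h₃]

lemma satisfiable_of_pq (h : Occ12 F ℓ p q C₂ C₃) (hK : isKCNF 3 F) {τ : ℕ → Bool}
    (hτ : satCNF τ (F \ occ F ℓ.1)) (hpq : τ p.1 = p.2 ∨ τ q.1 = q.2) : Satisfiable F := by
  obtain ⟨hℓp, hℓq, -⟩ := h.fst_ne hK
  obtain ⟨l, hl, hlℓ, hτl⟩ : ∃ l ∈ ({ℓ, p, q} : Clause), l ≠ ℓ ∧ τ l.1 = l.2 := by
    rcases hpq with hp | hq
    exacts [⟨p, by simp, Lit.ne_of_fst_ne hℓp.symm, hp⟩,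
      ⟨q, by simp, Lit.ne_of_fst_ne hℓq.symm, hq⟩]
  exact h.satisfiable hτ (satClause_resolvent_left hl hlℓ hτl) (satClause_resolvent_left hl hlℓ hτl)

/-- Delete `{ℓ, p, q}`: a model of the rest falsifies `p`, so `¬p` satisfies `C₂` and `C₃`. -/
lemma not_neg_mem_and_neg_mem (hF : IsMinUnsat34 F) (h : Occ12 F ℓ p q C₂ C₃) :
    ¬ (p.neg ∈ C₂ ∧ p.neg ∈ C₃) := by
  rintro ⟨h₂, h₃⟩
  obtain ⟨τ, hτ⟩ := hF.satisfiable_sdiff (singleton_subset_iff.2 h.mem₁) (singleton_nonempty _)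
  have hτ₁ : ¬ satClause τ {ℓ, p, q} := fun hτ₁ => hF.not_satisfiable ⟨τ, fun C hC => by
    by_cases hC' : C = {ℓ, p, q}
    · exact hC' ▸ hτ₁
    · exact hτ C (mem_sdiff.2 ⟨hC, by simpa using hC'⟩)⟩
  have hp : τ p.neg.1 = p.neg.2 := Lit.neg_eval_of_not_eval fun hp => hτ₁ ⟨p, by simp, hp⟩
  have hpℓ : p.neg ≠ ℓ.neg := Lit.ne_of_fst_ne (h.fst_ne hF.ks.1).1.symm
  have hsub : F \ occ F ℓ.1 ⊆ F \ {{ℓ, p, q}} :=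
    sdiff_subset_sdiff le_rfl (singleton_subset_iff.2 h.mem_occ₁)
  exact hF.not_satisfiable <| h.satisfiable (satCNF_mono hsub hτ)
    (satClause_resolvent_right h₂ hpℓ hp) (satClause_resolvent_right h₃ hpℓ hp)

/-- If `¬p` occurred only in `occ F ℓ.1`, making `p` and `¬ℓ` true would extend a model of
`F \ occ F ℓ.1`. -/
lemma exists_neg_mem_sdiff (hF : IsMinUnsat34 F) (h : Occ12 F ℓ p q C₂ C₃) :
    ∃ E ∈ F \ occ F ℓ.1, p.neg ∈ E := by
  by_contra hE
  push Not at hE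
  obtain ⟨τ, hτ⟩ := hF.satisfiable_sdiff (occ_subset F ℓ.1) ⟨_, h.mem_occ₁⟩
  exact hF.not_satisfiable <| h.satisfiable_of_pq hF.ks.1
    (fun C hC => satClause_update_of_neg_not_mem (hE C hC) (hτ C hC)) (Or.inl (update_self _ _ _))

/-- Otherwise `occ F ℓ.1` could be replaced by `{p, q, z}` and `{p, q, ¬z}` for a fresh
variable `z`. -/
lemma three_le_vdeg_sdiff (hF : IsMinUnsat34 F) (h : Occ12 F ℓ p q C₂ C₃) :
    3 ≤ vdeg (F \ occ F ℓ.1) p.1 ∨ 3 ≤ vdeg (F \ occ F ℓ.1) q.1 := by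
  by_contra hlt
  push Not at hlt
  have hK := hF.ks.1
  obtain ⟨-, -, hpq⟩ := h.fst_ne hK
  obtain ⟨z, hz⟩ := exists_fresh F
  have hz₁ := hz _ h.mem₁
  simp only [Clause.mem_vars_triple] at hz₁
  push Not at hz₁
  have hD : ∀ b, Clause.nontaut {p, q, (z, b)} ∧ ({p, q, (z, b)} : Clause).card = 3 := fun _ =>
    Clause.triple_iff.2 ⟨hpq, Ne.symm hz₁.2.1, Ne.symm hz₁.2.2⟩
  obtain ⟨τ, hτ, h₁, h₂⟩ := hF.exists_satCNF_sdiff_pair (occ_subset F ℓ.1) (h.vdeg_eq hK).ge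
    (hD true) (hD false) fun v => by
      have hY := (vdeg_le_card {{p, q, (z, true)}, {p, q, (z, false)}} v).trans card_le_two
      by_cases hv : v = p.1 ∨ v = q.1 ∨ v = z
      · rcases hv with rfl | rfl | rfl
        · omega
        · omega
        · exact vdeg_sdiff_add_le_of_fresh hz (card_le_two.trans (by norm_num))
      · push Not at hv
        have h0 : vdeg {{p, q, (z, true)}, {p, q, (z, false)}} v = 0 := by
          simp [vdeg, eq_empty_iff_forall_notMem, mem_occ_iff, hv.1, hv.2.1, hv.2.2]
        exact hF.vdeg_sdiff_add_le (h0.trans_le (Nat.zero_le _))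
  simp only [satClause_insert, satClause_singleton] at h₁ h₂
  refine hF.not_satisfiable (h.satisfiable_of_pq hK hτ ?_)
  cases hzτ : τ z
  · simpa [hzτ] using h₁
  · simpa [hzτ] using h₂

lemma vdeg_pair_le_inter_occ {a₂ b₂ a₃ b₃ : Lit}
    (h : Occ12 F ℓ p q {ℓ.neg, a₂, b₂} {ℓ.neg, a₃, b₃}) (hK : isKCNF 3 F) {v : ℕ} :
    vdeg {{p, a₂, b₂}, {q, a₃, b₃}} v ≤ (occ F v ∩ occ F ℓ.1).card := by
  have hX := occ_subset F ℓ.1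
  refine vdeg_pair_le (A₁ := if v = p.1 then {ℓ, p, q} else {ℓ.neg, a₂, b₂})
    (A₂ := if v = q.1 then {ℓ, p, q} else {ℓ.neg, a₃, b₃}) (fun hv => ?_) (fun hv => ?_)
    fun _ _ => ?_
  · split_ifs with hvp
    · exact mem_occ_inter h.mem_occ₁ hX (by simp [hvp])
    · exact mem_occ_inter h.mem_occ₂ hX (by simp only [Clause.mem_vars_triple] at hv ⊢; tauto)
  · split_ifs with hvq
    · exact mem_occ_inter h.mem_occ₁ hX (by simp [hvq])
    · exact mem_occ_inter h.mem_occ₃ hX (by simp only [Clause.mem_vars_triple] at hv ⊢; tauto)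
  · split_ifs with hvp hvq hvq
    exacts [absurd (hvp ▸ hvq) (h.fst_ne hK).2.2, h.ne₁₃ hK, (h.ne₁₂ hK).symm, h.ne]

/-- Otherwise `occ F ℓ.1` could be replaced by `{p} ∪ (C₂ - ¬ℓ)` and `{q} ∪ (C₃ - ¬ℓ)`, which lie
in the resolvents on `ℓ`. -/
lemma fst_mem_vars_or (hF : IsMinUnsat34 F) (h : Occ12 F ℓ p q C₂ C₃) :
    p.1 ∈ C₂.vars ∨ q.1 ∈ C₃.vars := by
  by_contra hpq
  push Not at hpq
  obtain ⟨hp, hq⟩ := hpq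
  have hK := hF.ks.1
  obtain ⟨hℓp, hℓq, -⟩ := h.fst_ne hK
  obtain ⟨a₂, b₂, rfl⟩ := Clause.exists_eq_triple (hK _ h.mem₂).2 h.neg_mem₂
  obtain ⟨a₃, b₃, rfl⟩ := Clause.exists_eq_triple (hK _ h.mem₃).2 h.neg_mem₃
  obtain ⟨hℓa₂, hℓb₂, hab₂⟩ := Clause.triple_iff.1 (hK _ h.mem₂)
  obtain ⟨hℓa₃, hℓb₃, hab₃⟩ := Clause.triple_iff.1 (hK _ h.mem₃)
  simp only [Clause.mem_vars_triple, Lit.neg_fst] at hp hq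
  push Not at hp hq
  obtain ⟨τ, hτ, h₂, h₃⟩ := hF.exists_satCNF_sdiff_pair (occ_subset F ℓ.1) (h.vdeg_eq hK).ge
    (Clause.triple_iff.2 ⟨hp.2.1, hp.2.2, hab₂⟩) (Clause.triple_iff.2 ⟨hq.2.1, hq.2.2, hab₃⟩)
    fun v => hF.vdeg_sdiff_add_le (h.vdeg_pair_le_inter_occ hK)
  refine hF.not_satisfiable (h.satisfiable hτ (satClause_mono ?_ h₂) (satClause_mono ?_ h₃)) <;>
  simp [Clause.resolvent, insert_subset_iff, Lit.ne_of_fst_ne hℓp.symm,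
    Lit.ne_of_fst_ne hℓq.symm, Lit.ne_of_fst_ne hℓa₂.symm, Lit.ne_of_fst_ne hℓb₂.symm,
    Lit.ne_of_fst_ne hℓa₃.symm, Lit.ne_of_fst_ne hℓb₃.symm]

lemma occ_subset_insert (h : Occ12 F ℓ p q C₂ C₃) (hKS : KS 3 4 F) (hq₂ : q ∈ C₂)
    (hq₃ : q.neg ∈ C₃) {E : Clause} (hE : E ∈ F \ occ F ℓ.1) (hqE : q.neg ∈ E) :
    occ F q.1 ⊆ insert E (occ F ℓ.1) := by
  refine (eq_of_subset_of_card_le (fun C hC => ?_) ?_).symm.subset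
  · rcases mem_insert.1 hC with rfl | hC
    · exact mem_occ_fst_iff.2 ⟨(mem_sdiff.1 hE).1, Or.inr hqE⟩
    · rw [h.occ_eq, mem_insert, mem_insert, mem_singleton] at hC
      rcases hC with rfl | rfl | rfl
      · exact mem_occ_fst_iff.2 ⟨h.mem₁, Or.inl (by simp)⟩
      · exact mem_occ_fst_iff.2 ⟨h.mem₂, Or.inl hq₂⟩
      · exact mem_occ_fst_iff.2 ⟨h.mem₃, Or.inr hq₃⟩
  · rw [card_insert_of_notMem (mem_sdiff.1 hE).2]
    change vdeg F q.1 ≤ vdeg F ℓ.1 + 1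
    rw [h.vdeg_eq hKS.1]
    exact hKS.2 q.1

/-- The occurrences of `q.1` all lie in `occ F ℓ.1` and `E = {¬q, e₁, e₂}`, so `q` can be
flipped freely: make `q` true if `e₁` or `e₂` holds, and `¬q` true otherwise. -/
lemma satisfiable_of_satCNF_sdiff_insert {r : Lit} (h : Occ12 F ℓ p q {ℓ.neg, q, r} C₃)
    (hK : isKCNF 3 F) (hq₃ : q.neg ∈ C₃) {e₁ e₂ : Lit} (hE : {q.neg, e₁, e₂} ∈ F \ occ F ℓ.1)
    (hq : occ F q.1 ⊆ insert {q.neg, e₁, e₂} (occ F ℓ.1)) {τ : ℕ → Bool}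
    (hτ : satCNF τ (F \ insert {q.neg, e₁, e₂} (occ F ℓ.1)))
    (hτ' : satClause τ {p, r} ∨ satClause τ {e₁, e₂}) : Satisfiable F := by
  obtain ⟨-, hℓq, hpq⟩ := h.fst_ne hK
  obtain ⟨-, hℓr, hqr⟩ := Clause.triple_iff.1 (hK _ h.mem₂)
  obtain ⟨hqe₁, hqe₂, -⟩ := Clause.triple_iff.1 (hK _ (mem_sdiff.1 hE).1)
  simp only [Lit.neg_fst] at hℓr hqe₁ hqe₂
  have hσ : ∀ b, satClause (update τ q.1 b) {q.neg, e₁, e₂} →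
      satCNF (update τ q.1 b) (F \ occ F ℓ.1) := fun b hb C hC => by
    by_cases hCE : C = {q.neg, e₁, e₂}
    · exact hCE ▸ hb
    · exact satCNF_update_of_occ_subset hτ hq b C
        (by simp only [mem_sdiff, mem_insert] at hC ⊢; tauto)
  have hqσ : satClause (update τ q.1 q.neg.2) {q.neg, e₁, e₂} :=
    ⟨q.neg, mem_insert_self _ _, update_self _ _ _⟩
  simp only [satClause_insert, satClause_singleton] at hτ'
  rcases hτ' with (hpτ | hrτ) | (heτ | heτ)
  · exact h.satisfiable_of_pq hK (hσ _ hqσ) (Or.inl (by rwa [update_of_ne hpq]))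
  · exact h.satisfiable (hσ _ hqσ)
      (satClause_resolvent_right (by simp) (Lit.ne_of_fst_ne hℓr.symm)
        (by rwa [update_of_ne hqr.symm]))
      (satClause_resolvent_right hq₃ (Lit.ne_of_fst_ne hℓq.symm) (update_self _ _ _))
  · exact h.satisfiable_of_pq hK (hσ q.2 ⟨e₁, by simp, by rwa [update_of_ne hqe₁.symm]⟩)
      (Or.inr (update_self _ _ _))
  · exact h.satisfiable_of_pq hK (hσ q.2 ⟨e₂, by simp, by rwa [update_of_ne hqe₂.symm]⟩)
      (Or.inr (update_self _ _ _))

lemma vdeg_pair_le_inter_insert {r e₁ e₂ : Lit} (h : Occ12 F ℓ p q {ℓ.neg, q, r} C₃)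
    (hE : {q.neg, e₁, e₂} ∈ F \ occ F ℓ.1) {z v : ℕ} (hvz : v ≠ z) :
    vdeg {{p, r, (z, true)}, {e₁, e₂, (z, false)}} v ≤
      (occ F v ∩ insert {q.neg, e₁, e₂} (occ F ℓ.1)).card := by
  obtain ⟨hEF, hEℓ⟩ := mem_sdiff.1 hE
  have hXF : insert {q.neg, e₁, e₂} (occ F ℓ.1) ⊆ F := insert_subset hEF (occ_subset F ℓ.1)
  refine vdeg_pair_le (A₁ := if v = p.1 then {ℓ, p, q} else {ℓ.neg, q, r})
    (A₂ := {q.neg, e₁, e₂}) (fun hv => ?_) (fun hv => ?_) fun _ _ => ?_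
  · simp only [Clause.mem_vars_triple] at hv
    split_ifs with hvp
    · exact mem_occ_inter (mem_insert_of_mem h.mem_occ₁) hXF (by simp [hvp])
    · exact mem_occ_inter (mem_insert_of_mem h.mem_occ₂) hXF
        (by simp only [Clause.mem_vars_triple]; tauto)
  · simp only [Clause.mem_vars_triple] at hv
    exact mem_occ_inter (mem_insert_self _ _) hXF (by simp only [Clause.mem_vars_triple]; tauto)
  · split_ifs
    exacts [fun e => hEℓ (e ▸ h.mem_occ₁), fun e => hEℓ (e ▸ h.mem_occ₂)]

/-- Otherwise `occ F ℓ.1` and `E = {¬q, e₁, e₂}` could be replaced by `{p, r, z}` and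
`{e₁, e₂, ¬z}`, where `C₂ = {¬ℓ, q, r}` and `z` is fresh. -/
lemma fst_mem_vars_of_neg_mem (hF : IsMinUnsat34 F) (h : Occ12 F ℓ p q C₂ C₃) (hq₂ : q ∈ C₂)
    (hq₃ : q.neg ∈ C₃) {E : Clause} (hE : E ∈ F \ occ F ℓ.1) (hqE : q.neg ∈ E) :
    p.1 ∈ C₂.vars := by
  by_contra hp
  have hK := hF.ks.1
  have hq := h.occ_subset_insert hF.ks hq₂ hq₃ hE hqE
  have hEF := (mem_sdiff.1 hE).1
  obtain ⟨r, rfl⟩ := Clause.exists_eq_triple_of_mem₂ (hK _ h.mem₂).2 h.neg_mem₂ hq₂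
    (Lit.ne_of_fst_ne (h.fst_ne hK).2.1)
  obtain ⟨e₁, e₂, rfl⟩ := Clause.exists_eq_triple (hK _ hEF).2 hqE
  have hpr : p.1 ≠ r.1 := fun e => hp (by simp [e])
  obtain ⟨z, hz⟩ := exists_fresh F
  have hz₁ := hz _ h.mem₁
  have hz₂ := hz _ h.mem₂
  have hzE := hz _ hEF
  simp only [Clause.mem_vars_triple] at hz₁ hz₂ hzE
  push Not at hz₁ hz₂ hzE
  obtain ⟨τ, hτ, h₁, h₂⟩ := hF.exists_satCNF_sdiff_pair (D₁ := {p, r, (z, true)})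
    (D₂ := {e₁, e₂, (z, false)}) (insert_subset hEF (occ_subset F ℓ.1))
    ((h.vdeg_eq hK).ge.trans (card_le_card (subset_insert _ _)))
    (Clause.triple_iff.2 ⟨hpr, Ne.symm hz₁.2.1, Ne.symm hz₂.2.2⟩)
    (Clause.triple_iff.2 ⟨(Clause.triple_iff.1 (hK _ hEF)).2.2, Ne.symm hzE.2.1,
      Ne.symm hzE.2.2⟩) fun v => by
      by_cases hvz : v = z
      · subst hvz
        exact vdeg_sdiff_add_le_of_fresh hz (card_le_two.trans (by norm_num))
      · exact hF.vdeg_sdiff_add_le (h.vdeg_pair_le_inter_insert hE hvz)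
  simp only [satClause_insert, satClause_singleton] at h₁ h₂
  refine hF.not_satisfiable (h.satisfiable_of_satCNF_sdiff_insert hK hq₃ hE hq hτ ?_)
  simp only [satClause_insert, satClause_singleton]
  cases hzτ : τ z
  · exact Or.inl (by simpa [hzτ] using h₁)
  · exact Or.inr (by simpa [hzτ] using h₂)

theorem exists_companion (hF : IsMinUnsat34 F) (h : Occ12 F ℓ p q C₂ C₃) :
    (p ∈ C₂ ∧ p ∈ C₃) ∨ (q ∈ C₂ ∧ q ∈ C₃) := by
  wlog hp : 3 ≤ vdeg (F \ occ F ℓ.1) p.1 generalizing p q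
  · exact (this h.swap_pq ((h.three_le_vdeg_sdiff hF).resolve_left hp)).symm
  have hK := hF.ks.1
  have hle : (occ F p.1 ∩ occ F ℓ.1).card ≤ 1 := by
    have := vdeg_sdiff_add_card_inter F (occ F ℓ.1) p.1
    have := hF.ks.2 p.1
    omega
  have hC₁ := mem_occ_inter (v := p.1) h.mem_occ₁ (occ_subset F ℓ.1) (by simp)
  have hp₂ : p.1 ∉ C₂.vars := fun hv => h.ne₁₂ hK
    (card_le_one.1 hle _ hC₁ _ (mem_occ_inter h.mem_occ₂ (occ_subset F ℓ.1) hv))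
  have hp₃ : p.1 ∉ C₃.vars := fun hv => h.ne₁₃ hK
    (card_le_one.1 hle _ hC₁ _ (mem_occ_inter h.mem_occ₃ (occ_subset F ℓ.1) hv))
  have hq₃ := (h.fst_mem_vars_or hF).resolve_left hp₂
  have hq₂ := (h.swap₂₃.fst_mem_vars_or hF).resolve_left hp₃
  rcases Clause.mem_or_neg_mem hq₂ with hq₂ | hq₂ <;>
    rcases Clause.mem_or_neg_mem hq₃ with hq₃ | hq₃
  · exact Or.inr ⟨hq₂, hq₃⟩
  · obtain ⟨E, hE, hqE⟩ := h.swap_pq.exists_neg_mem_sdiff hF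
    exact absurd (h.fst_mem_vars_of_neg_mem hF hq₂ hq₃ hE hqE) hp₂
  · obtain ⟨E, hE, hqE⟩ := h.swap_pq.exists_neg_mem_sdiff hF
    exact absurd (h.swap₂₃.fst_mem_vars_of_neg_mem hF hq₃ hq₂ hE hqE) hp₃
  · exact absurd ⟨hq₂, hq₃⟩ (h.swap_pq.not_neg_mem_and_neg_mem hF)

end Occ12

namespace IsMinUnsat34

variable {F : CNF}

lemma exists_occ12 (hF : IsMinUnsat34 F) {x : ℕ} (hx : vdeg F x = 3) :
    ∃ ℓ p q C₂ C₃, ℓ.1 = x ∧ Occ12 F ℓ p q C₂ C₃ := by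
  have hK := hF.ks.1
  have ht := hF.ldeg_pos (l := (x, true)) (by change 0 < vdeg F x; omega)
  have hf := hF.ldeg_pos (l := (x, false)) (by change 0 < vdeg F x; omega)
  have hsum : ldeg F (x, true) + ldeg F (x, false) = 3 := hx ▸ ldeg_add_ldeg_neg hK (x, true)
  obtain ⟨ℓ, rfl, h₁, h₂⟩ : ∃ ℓ : Lit, ℓ.1 = x ∧ ldeg F ℓ = 1 ∧ ldeg F ℓ.neg = 2 := by
    by_cases h : ldeg F (x, true) = 1
    · exact ⟨(x, true), rfl, h, by change ldeg F (x, false) = 2; omega⟩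
    · exact ⟨(x, false), rfl, by omega, by change ldeg F (x, true) = 2; omega⟩
  obtain ⟨C₁, hC₁⟩ := card_eq_one.1 h₁
  obtain ⟨C₂, C₃, hne, hC₂₃⟩ := card_eq_two.1 h₂
  have hC₁F := mem_filter.1 (hC₁ ▸ mem_singleton_self C₁ : C₁ ∈ F.filter (ℓ ∈ ·))
  obtain ⟨p, q, rfl⟩ := Clause.exists_eq_triple (hK _ hC₁F.1).2 hC₁F.2
  exact ⟨ℓ, p, q, C₂, C₃, rfl, hC₁, hC₂₃, hne⟩

lemma exists_companion (hF : IsMinUnsat34 F) {x : ℕ} (hx : vdeg F x = 3) :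
    ∃ a : Lit, a.1 ≠ x ∧ ∀ C ∈ occ F x, a ∈ C := by
  obtain ⟨ℓ, p, q, C₂, C₃, rfl, h⟩ := hF.exists_occ12 hx
  obtain ⟨hℓp, hℓq, -⟩ := h.fst_ne hF.ks.1
  rw [h.occ_eq]
  rcases h.exists_companion hF with ⟨h₂, h₃⟩ | ⟨h₂, h₃⟩
  · exact ⟨p, Ne.symm hℓp, by simp [h₂, h₃]⟩
  · exact ⟨q, Ne.symm hℓq, by simp [h₂, h₃]⟩

lemma three_lt_vdeg_of_forall_mem (hF : IsMinUnsat34 F) {x : ℕ} (hx : vdeg F x = 3) {a : Lit}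
    (ha : ∀ C ∈ occ F x, a ∈ C) : 3 < vdeg F a.1 := by
  have h₃ : 3 ≤ ldeg F a := hx ▸ card_le_ldeg (occ_subset F x) ha
  have hsum := ldeg_add_ldeg_neg hF.ks.1 a
  have h₁ := hF.ldeg_pos (l := a.neg) (by change 0 < vdeg F a.1; omega)
  omega

lemma occ_eq_of_forall_mem (hF : IsMinUnsat34 F) {x w : ℕ} (hx : vdeg F x = 3)
    (hw : vdeg F w = 3) {a : Lit} (hax : ∀ C ∈ occ F x, a ∈ C) (haw : ∀ C ∈ occ F w, a ∈ C) :
    occ F w = occ F x := by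
  have hle : (occ F x ∪ occ F w).card ≤ 3 := by
    have ha := hF.three_lt_vdeg_of_forall_mem hx hax
    have h₁ := hF.ldeg_pos (l := a.neg) (by change 0 < vdeg F a.1; omega)
    have := card_le_ldeg (union_subset (occ_subset F x) (occ_subset F w))
      (fun C hC => (mem_union.1 hC).elim (hax C) (haw C))
    have := ldeg_add_ldeg_neg hF.ks.1 a
    have := hF.ks.2 a.1
    omega
  have hunion : occ F x = occ F x ∪ occ F w :=
    eq_of_subset_of_card_le subset_union_left (hle.trans hx.ge)
  exact eq_of_subset_of_card_le (hunion ▸ subset_union_right) (hx.trans hw.symm).le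

lemma occ_ne_occ (hF : IsMinUnsat34 F) {x w : ℕ} (hx : vdeg F x = 3) (hxw : x ≠ w) :
    occ F w ≠ occ F x := by
  intro hocc
  obtain ⟨ℓ, p, q, C₂, C₃, rfl, h⟩ := hF.exists_occ12 hx
  have hw := (mem_occ_iff.1 (hocc ▸ h.mem_occ₁)).2
  simp only [Clause.mem_vars_triple] at hw
  obtain ⟨τ, hτ⟩ := hF.satisfiable_sdiff (occ_subset F ℓ.1) ⟨_, h.mem_occ₁⟩
  rcases hw with rfl | rfl | rfl
  · exact hxw rfl
  · exact hF.not_satisfiable <| h.satisfiable_of_pq hF.ks.1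
      (satCNF_update_of_occ_subset hτ hocc.subset p.2) (Or.inl (update_self _ _ _))
  · exact hF.not_satisfiable <| h.satisfiable_of_pq hF.ks.1
      (satCNF_update_of_occ_subset hτ hocc.subset q.2) (Or.inr (update_self _ _ _))

end IsMinUnsat34

theorem stmt16 (F : CNF) (hF : KS 3 4 F) (hunsat : ¬ Satisfiable F)
    (hmin : ∀ G : CNF, KS 3 4 G → ¬ Satisfiable G → F.card ≤ G.card)
    (x w : ℕ) (hxw : x ≠ w) (hx : vdeg F x = 3) (hw : vdeg F w = 3) :
    Disjoint (occ F x) (occ F w) := by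
  have hF' : IsMinUnsat34 F := ⟨hF, hunsat, hmin⟩
  refine disjoint_left.2 fun C hCx hCw => ?_
  obtain ⟨a, hax, ha⟩ := hF'.exists_companion hx
  obtain ⟨b, hbw, hb⟩ := hF'.exists_companion hw
  have haw : a.1 ≠ w := fun e => by simpa [e, hw] using hF'.three_lt_vdeg_of_forall_mem hx ha
  have hbx : b.1 ≠ x := fun e => by simpa [e, hx] using hF'.three_lt_vdeg_of_forall_mem hw hb
  obtain ⟨hCF, hxC⟩ := mem_occ_iff.1 hCx
  obtain rfl : a = b := Clause.eq_of_fst_ne (hF.1 C hCF).1 (hF.1 C hCF).2 hxC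
    (mem_occ_iff.1 hCw).2 hxw (ha C hCx) (hb C hCw) hax haw hbx hbw
  exact hF'.occ_ne_occ hx hxw (hF'.occ_eq_of_forall_mem hx hw ha hb)
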